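/- arXiv:2106.03579 — 3 statements merged into one kernel-verified Lean document; each statement's English description precedes it below -/
import Mathlib

section
/- Let R ∈ ℝ^{n×n} have all entries in (0,1], let (x*,y*) be a Nash equilibrium of the associated zero-sum game, fix ρ > 1 and η ∈ (0, 1/2], and let (x,y) be a fully mixed profile that is NOT an 8η^{1/ρ}-Nash equilibrium. Then there exists ξ₀ > 0 such that for every ξ ≥ ξ₀, the profile (x',y') produced by one FLBR-MWU step from (x,y) with parameters η and ξ satisfies D_KL((x*,y*)||(x',y')) ≤ D_KL((x*,y*)||(x,y)) − 4η^{1+1/ρ}. -/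
open Finset Real Filter

/-- A probability vector (mixed strategy) on `Fin n`. -/
def IsProbVec {n : ℕ} (x : Fin n → ℝ) : Prop := (∀ i, 0 ≤ x i) ∧ ∑ i, x i = 1

/-- A fully mixed strategy: all coordinates strictly positive. -/
def FullyMixed {n : ℕ} (x : Fin n → ℝ) : Prop := ∀ i, 0 < x i

/-- Expected payoff of the row player, `xᵀ R y`. -/
def payoff {n : ℕ} (R : Matrix (Fin n) (Fin n) ℝ) (x y : Fin n → ℝ) : ℝ :=
  ∑ i, ∑ j, x i * R i j * y j

/-- `e_iᵀ R y`, the payoff of pure row strategy `i` against `y`. -/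
def rowPayoff {n : ℕ} (R : Matrix (Fin n) (Fin n) ℝ) (y : Fin n → ℝ) (i : Fin n) : ℝ :=
  ∑ j, R i j * y j

/-- `xᵀ R e_j`, the (row player's) payoff when the column player plays pure strategy `j`. -/
def colPayoff {n : ℕ} (R : Matrix (Fin n) (Fin n) ℝ) (x : Fin n → ℝ) (j : Fin n) : ℝ :=
  ∑ i, x i * R i j

/-- `(x, y)` is a Nash equilibrium of the zero-sum game with payoff matrix `R`. -/
def IsNash {n : ℕ} (R : Matrix (Fin n) (Fin n) ℝ) (x y : Fin n → ℝ) : Prop :=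
  IsProbVec x ∧ IsProbVec y ∧ (∀ i, rowPayoff R y i ≤ payoff R x y) ∧
    (∀ j, payoff R x y ≤ colPayoff R x j)

/-- `(x, y)` is an `ε`-Nash equilibrium. -/
def IsEpsNash {n : ℕ} (R : Matrix (Fin n) (Fin n) ℝ) (x y : Fin n → ℝ) (ε : ℝ) : Prop :=
  (∀ i, rowPayoff R y i ≤ payoff R x y + ε) ∧ (∀ j, payoff R x y - ε ≤ colPayoff R x j)

/-- Intermediate (IBR) strategy of the row player:
`x̂ᵢ = xᵢ e^{ξ (Ry)ᵢ} / ∑ⱼ xⱼ e^{ξ (Ry)ⱼ}`. -/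
noncomputable def brX {n : ℕ} (ξ : ℝ) (R : Matrix (Fin n) (Fin n) ℝ) (x y : Fin n → ℝ) :
    Fin n → ℝ :=
  fun i => x i * Real.exp (ξ * rowPayoff R y i) / ∑ j, x j * Real.exp (ξ * rowPayoff R y j)

/-- Intermediate (IBR) strategy of the column player:
`ŷⱼ = yⱼ e^{-ξ (Rᵀx)ⱼ} / ∑ₖ yₖ e^{-ξ (Rᵀx)ₖ}`. -/
noncomputable def brY {n : ℕ} (ξ : ℝ) (R : Matrix (Fin n) (Fin n) ℝ) (x y : Fin n → ℝ) :
    Fin n → ℝ :=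
  fun j => y j * Real.exp (-(ξ * colPayoff R x j)) / ∑ k, y k * Real.exp (-(ξ * colPayoff R x k))

/-- Multiplicative-weights update of the row player against the (intermediate) strategy `yh`. -/
noncomputable def mwuX {n : ℕ} (η : ℝ) (R : Matrix (Fin n) (Fin n) ℝ) (x yh : Fin n → ℝ) :
    Fin n → ℝ :=
  fun i => x i * Real.exp (η * rowPayoff R yh i) / ∑ j, x j * Real.exp (η * rowPayoff R yh j)

/-- Multiplicative-weights update of the column player against the (intermediate) strategy `xh`. -/
noncomputable def mwuY {n : ℕ} (η : ℝ) (R : Matrix (Fin n) (Fin n) ℝ) (y xh : Fin n → ℝ) :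
    Fin n → ℝ :=
  fun j => y j * Real.exp (-(η * colPayoff R xh j)) / ∑ k, y k * Real.exp (-(η * colPayoff R xh k))

/-- One full step of the FLBR-MWU dynamics with update rate `η` and intermediate rate `ξ`. -/
noncomputable def flbrStep {n : ℕ} (η ξ : ℝ) (R : Matrix (Fin n) (Fin n) ℝ)
    (p : (Fin n → ℝ) × (Fin n → ℝ)) : (Fin n → ℝ) × (Fin n → ℝ) :=
  (mwuX η R p.1 (brY ξ R p.1 p.2), mwuY η R p.2 (brX ξ R p.1 p.2))

/-- Kullback–Leibler divergence `∑ᵢ xsᵢ ln(xsᵢ / xᵢ)` (with the convention `0 · ln 0 = 0`). -/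
noncomputable def klDiv {n : ℕ} (xs x : Fin n → ℝ) : ℝ := ∑ i, xs i * Real.log (xs i / x i)

/-- KL divergence of the profile `(x, y)` from `(xs, ys)`. -/
noncomputable def klProfile {n : ℕ} (xs ys x y : Fin n → ℝ) : ℝ := klDiv xs x + klDiv ys y
section Aux

open Topology

lemma exp_le_quad {z : ℝ} (h : |z| ≤ 1) : Real.exp z ≤ 1 + z + z ^ 2 := by
  have h2 := Real.exp_bound h (n := 2) (by norm_num)
  have hsum : ∑ m ∈ Finset.range 2, z ^ m / m.factorial = 1 + z := by
    simp [Finset.sum_range_succ]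
  rw [hsum] at h2
  have h3 := (abs_sub_le_iff.1 h2).1
  have hz2 : |z| ^ 2 = z ^ 2 := by rw [sq_abs]
  rw [hz2] at h3
  norm_num at h3
  nlinarith [sq_nonneg z]

lemma probvec_pos_n {n : ℕ} {x : Fin n → ℝ} (hx : IsProbVec x) : 0 < n := by
  rcases Nat.eq_zero_or_pos n with h | h
  · subst h; simpa using hx.2
  · exact h

lemma kl_update {n : ℕ} (xs x : Fin n → ℝ) (hxs : IsProbVec xs) (hx : FullyMixed x)
    (a : Fin n → ℝ) :
    klDiv xs (fun i => x i * Real.exp (a i) / ∑ j, x j * Real.exp (a j)) =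
      klDiv xs x - (∑ i, xs i * a i) + Real.log (∑ j, x j * Real.exp (a j)) := by
  have hn : 0 < n := probvec_pos_n hxs
  set S := ∑ j, x j * Real.exp (a j) with hSdef
  have hS : 0 < S := Finset.sum_pos (fun j _ => mul_pos (hx j) (Real.exp_pos _))
    ⟨⟨0, hn⟩, Finset.mem_univ _⟩
  have key : ∀ i, xs i * Real.log (xs i / (x i * Real.exp (a i) / S)) =
      xs i * Real.log (xs i / x i) - xs i * a i + xs i * Real.log S := by
    intro i
    rcases eq_or_lt_of_le (hxs.1 i) with h0 | h0
    · simp [← h0]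
    · have hxi := hx i
      have hexp := Real.exp_pos (a i)
      rw [Real.log_div (ne_of_gt h0) (by positivity),
        Real.log_div (by positivity) (ne_of_gt hS),
        Real.log_mul (ne_of_gt hxi) (ne_of_gt hexp), Real.log_exp,
        Real.log_div (ne_of_gt h0) (ne_of_gt hxi)]
      ring
  unfold klDiv
  rw [Finset.sum_congr rfl (fun i _ => key i)]
  rw [Finset.sum_add_distrib, Finset.sum_sub_distrib, ← Finset.sum_mul, hxs.2, one_mul]

lemma log_Z_le {n : ℕ} (x z : Fin n → ℝ) (hx : IsProbVec x) (hxm : FullyMixed x)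
    (B : ℝ) (hz : ∀ i, |z i| ≤ 1) (hzB : ∀ i, z i ^ 2 ≤ B) :
    Real.log (∑ i, x i * Real.exp (z i)) ≤ (∑ i, x i * z i) + B := by
  have hn : 0 < n := probvec_pos_n hx
  have hS : 0 < ∑ i, x i * Real.exp (z i) :=
    Finset.sum_pos (fun j _ => mul_pos (hxm j) (Real.exp_pos _)) ⟨⟨0, hn⟩, Finset.mem_univ _⟩
  have h1 : (∑ i, x i * Real.exp (z i)) ≤ ∑ i, x i * (1 + z i + z i ^ 2) :=
    Finset.sum_le_sum fun i _ =>
      mul_le_mul_of_nonneg_left (exp_le_quad (hz i)) (hx.1 i)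
  have h2 : (∑ i, x i * (1 + z i + z i ^ 2)) ≤ 1 + (∑ i, x i * z i) + B := by
    have : ∀ i, x i * (1 + z i + z i ^ 2) = x i + x i * z i + x i * z i ^ 2 := fun i => by ring
    rw [Finset.sum_congr rfl fun i _ => this i, Finset.sum_add_distrib,
      Finset.sum_add_distrib, hx.2]
    have h3 : (∑ i, x i * z i ^ 2) ≤ ∑ i, x i * B :=
      Finset.sum_le_sum fun i _ => mul_le_mul_of_nonneg_left (hzB i) (hx.1 i)
    rw [← Finset.sum_mul, hx.2, one_mul] at h3
    linarith
  calc Real.log (∑ i, x i * Real.exp (z i)) ≤ (∑ i, x i * Real.exp (z i)) - 1 :=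
        Real.log_le_sub_one_of_pos hS
    _ ≤ (∑ i, x i * z i) + B := by linarith

lemma payoff_eq_row {n : ℕ} (R : Matrix (Fin n) (Fin n) ℝ) (x y : Fin n → ℝ) :
    payoff R x y = ∑ i, x i * rowPayoff R y i := by
  unfold payoff rowPayoff
  exact Finset.sum_congr rfl fun i _ => by
    rw [Finset.mul_sum]; exact Finset.sum_congr rfl fun j _ => by ring

lemma payoff_eq_col {n : ℕ} (R : Matrix (Fin n) (Fin n) ℝ) (x y : Fin n → ℝ) :
    payoff R x y = ∑ j, y j * colPayoff R x j := by
  unfold payoff colPayoff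
  rw [Finset.sum_comm]
  exact Finset.sum_congr rfl fun j _ => by
    rw [Finset.mul_sum]; exact Finset.sum_congr rfl fun i _ => by ring

lemma softmin_tendsto {n : ℕ} (hn : 0 < n) (w c : Fin n → ℝ) (hw : ∀ j, 0 < w j) :
    Tendsto (fun ξ : ℝ => (∑ j, w j * Real.exp (-(ξ * c j)) * c j) /
      (∑ j, w j * Real.exp (-(ξ * c j)))) atTop
      (𝓝 (Finset.univ.inf' ⟨⟨0, hn⟩, Finset.mem_univ _⟩ c)) := by
  set m := Finset.univ.inf' ⟨⟨0, hn⟩, Finset.mem_univ _⟩ c with hm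
  have hterm : ∀ j : Fin n, Tendsto (fun ξ : ℝ => w j * Real.exp (-(ξ * (c j - m))))
      atTop (𝓝 (if c j = m then w j else 0)) := by
    intro j
    by_cases h : c j = m
    · simpa [h] using (tendsto_const_nhds : Tendsto (fun _ : ℝ => w j) atTop _)
    · have hle : m ≤ c j := Finset.inf'_le c (Finset.mem_univ j)
      have hd : 0 < c j - m := sub_pos.mpr (hle.lt_of_ne fun h' => h h'.symm)
      have h1 : Tendsto (fun ξ : ℝ => ξ * (c j - m)) atTop atTop :=
        Tendsto.atTop_mul_const hd tendsto_id
      have h2 : Tendsto (fun ξ : ℝ => Real.exp (-(ξ * (c j - m)))) atTop (𝓝 0) :=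
        Real.tendsto_exp_atBot.comp (tendsto_neg_atTop_atBot.comp h1)
      simpa [h] using h2.const_mul (w j)
  have hN : Tendsto (fun ξ : ℝ => ∑ j, w j * Real.exp (-(ξ * (c j - m))) * c j) atTop
      (𝓝 (∑ j, (if c j = m then w j else 0) * c j)) :=
    tendsto_finset_sum _ (fun j _ => (hterm j).mul_const (c j))
  have hD : Tendsto (fun ξ : ℝ => ∑ j, w j * Real.exp (-(ξ * (c j - m)))) atTop
      (𝓝 (∑ j, if c j = m then w j else 0)) :=
    tendsto_finset_sum _ (fun j _ => hterm j)
  set W := ∑ j, if c j = m then w j else 0 with hW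
  have hj0 : ∃ j : Fin n, c j = m := by
    obtain ⟨i, _, hi⟩ := Finset.exists_mem_eq_inf' (⟨⟨0, hn⟩, Finset.mem_univ _⟩ :
      (Finset.univ : Finset (Fin n)).Nonempty) c
    exact ⟨i, hi.symm⟩
  obtain ⟨j0, hj0⟩ := hj0
  have hWpos : 0 < W := by
    apply Finset.sum_pos' (fun j _ => by split <;> [exact (hw j).le; exact le_refl 0])
    exact ⟨j0, Finset.mem_univ _, by simp [hj0, hw j0]⟩
  have hNval : (∑ j, (if c j = m then w j else 0) * c j) = m * W := by
    rw [hW, Finset.mul_sum]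
    refine Finset.sum_congr rfl fun j _ => ?_
    split
    · next h => rw [h]; ring
    · simp
  have hlim : Tendsto (fun ξ : ℝ => (∑ j, w j * Real.exp (-(ξ * (c j - m))) * c j) /
      (∑ j, w j * Real.exp (-(ξ * (c j - m))))) atTop (𝓝 m) := by
    have := hN.div hD (ne_of_gt hWpos)
    rwa [hNval, mul_div_assoc, div_self (ne_of_gt hWpos), mul_one] at this
  refine hlim.congr fun ξ => ?_
  have hfac : ∀ j, w j * Real.exp (-(ξ * (c j - m))) =
      Real.exp (ξ * m) * (w j * Real.exp (-(ξ * c j))) := by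
    intro j
    have h : -(ξ * (c j - m)) = ξ * m + -(ξ * c j) := by ring
    rw [h, Real.exp_add]; ring
  have hNfac : (∑ j, w j * Real.exp (-(ξ * (c j - m))) * c j) =
      Real.exp (ξ * m) * ∑ j, w j * Real.exp (-(ξ * c j)) * c j := by
    rw [Finset.mul_sum]
    exact Finset.sum_congr rfl fun j _ => by rw [hfac j]; ring
  have hDfac : (∑ j, w j * Real.exp (-(ξ * (c j - m)))) =
      Real.exp (ξ * m) * ∑ j, w j * Real.exp (-(ξ * c j)) := by
    rw [Finset.mul_sum]
    exact Finset.sum_congr rfl fun j _ => hfac j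
  rw [hNfac, hDfac, mul_div_mul_left _ _ (Real.exp_ne_zero _)]

lemma brY_fm {n : ℕ} (hn : 0 < n) (ξ : ℝ) (R : Matrix (Fin n) (Fin n) ℝ)
    {x y : Fin n → ℝ} (hym : FullyMixed y) : FullyMixed (brY ξ R x y) := by
  intro j
  exact div_pos (mul_pos (hym j) (Real.exp_pos _))
    (Finset.sum_pos (fun k _ => mul_pos (hym k) (Real.exp_pos _)) ⟨⟨0, hn⟩, Finset.mem_univ _⟩)

lemma brY_prob {n : ℕ} (hn : 0 < n) (ξ : ℝ) (R : Matrix (Fin n) (Fin n) ℝ)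
    {x y : Fin n → ℝ} (hym : FullyMixed y) : IsProbVec (brY ξ R x y) := by
  refine ⟨fun j => (brY_fm hn ξ R hym j).le, ?_⟩
  unfold brY
  rw [← Finset.sum_div, div_self]
  exact ne_of_gt (Finset.sum_pos (fun k _ => mul_pos (hym k) (Real.exp_pos _))
    ⟨⟨0, hn⟩, Finset.mem_univ _⟩)

lemma brX_fm {n : ℕ} (hn : 0 < n) (ξ : ℝ) (R : Matrix (Fin n) (Fin n) ℝ)
    {x y : Fin n → ℝ} (hxm : FullyMixed x) : FullyMixed (brX ξ R x y) := by
  intro i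
  exact div_pos (mul_pos (hxm i) (Real.exp_pos _))
    (Finset.sum_pos (fun k _ => mul_pos (hxm k) (Real.exp_pos _)) ⟨⟨0, hn⟩, Finset.mem_univ _⟩)

lemma brX_prob {n : ℕ} (hn : 0 < n) (ξ : ℝ) (R : Matrix (Fin n) (Fin n) ℝ)
    {x y : Fin n → ℝ} (hxm : FullyMixed x) : IsProbVec (brX ξ R x y) := by
  refine ⟨fun i => (brX_fm hn ξ R hxm i).le, ?_⟩
  unfold brX
  rw [← Finset.sum_div, div_self]
  exact ne_of_gt (Finset.sum_pos (fun k _ => mul_pos (hxm k) (Real.exp_pos _))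
    ⟨⟨0, hn⟩, Finset.mem_univ _⟩)

end Aux

set_option maxHeartbeats 2000000 in
/-- If the fully mixed profile `(x, y)` is not an `8η^{1/ρ}`-Nash equilibrium,
then for all large enough `ξ`, one FLBR-MWU step decreases the KL divergence from the Nash
equilibrium `(xs, ys)` by at least `4η^{1+1/ρ}`. -/
theorem flbr_kl_decrease_rpow {n : ℕ} (R : Matrix (Fin n) (Fin n) ℝ)
    (hR : ∀ i j, 0 < R i j ∧ R i j ≤ 1)
    (xs ys : Fin n → ℝ) (hNash : IsNash R xs ys)
    (ρ : ℝ) (hρ : 1 < ρ) (η : ℝ) (hη : η ∈ Set.Ioc (0 : ℝ) (1 / 2))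
    (x y : Fin n → ℝ) (hx : IsProbVec x) (hy : IsProbVec y)
    (hxm : FullyMixed x) (hym : FullyMixed y)
    (hnot : ¬ IsEpsNash R x y (8 * η ^ (1 / ρ))) :
    ∃ ξ₀ > (0 : ℝ), ∀ ξ ≥ ξ₀,
      klProfile xs ys (flbrStep η ξ R (x, y)).1 (flbrStep η ξ R (x, y)).2
        ≤ klProfile xs ys x y - 4 * η ^ (1 + 1 / ρ) := by
  obtain ⟨hηpos, hη2⟩ := hη
  obtain ⟨hxsP, hysP, hNrow, hNcol⟩ := hNash
  have hn : 0 < n := probvec_pos_n hx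
  have hne : (Finset.univ : Finset (Fin n)).Nonempty := ⟨⟨0, hn⟩, Finset.mem_univ _⟩
  set v := payoff R xs ys with hv
  have hρ0 : 0 < ρ := by linarith
  have hρ1 : 1 / ρ ≤ 1 := by rw [div_le_one hρ0]; linarith
  set s := η ^ (1 / ρ) with hs
  have hspos : 0 < s := Real.rpow_pos_of_pos hηpos _
  set m := Finset.univ.inf' hne (colPayoff R x) with hmdef
  set M := -(Finset.univ.inf' hne (fun i => -(rowPayoff R y i))) with hMdef
  have hmle : ∀ j, m ≤ colPayoff R x j := fun j => Finset.inf'_le _ (Finset.mem_univ j)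
  have hMle : ∀ i, rowPayoff R y i ≤ M := fun i => by
    have := Finset.inf'_le (fun i => -(rowPayoff R y i)) (Finset.mem_univ i)
    rw [hMdef]; linarith
  have hm_le_p : m ≤ payoff R x y := by
    rw [payoff_eq_col]
    calc m = ∑ j, y j * m := by rw [← Finset.sum_mul, hy.2, one_mul]
    _ ≤ ∑ j, y j * colPayoff R x j := Finset.sum_le_sum fun j _ =>
        mul_le_mul_of_nonneg_left (hmle j) (hy.1 j)
  have hp_le_M : payoff R x y ≤ M := by
    rw [payoff_eq_row]
    calc ∑ i, x i * rowPayoff R y i ≤ ∑ i, x i * M := Finset.sum_le_sum fun i _ =>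
        mul_le_mul_of_nonneg_left (hMle i) (hx.1 i)
    _ = M := by rw [← Finset.sum_mul, hx.2, one_mul]
  have hgap : m ≤ M - 8 * s := by
    unfold IsEpsNash at hnot
    rcases not_and_or.mp hnot with h | h
    · push_neg at h
      obtain ⟨i, hi⟩ := h
      have := hMle i
      linarith [hm_le_p]
    · push_neg at h
      obtain ⟨j, hj⟩ := h
      have := hmle j
      linarith [hp_le_M]
  -- tendsto of the intermediate payoffs
  have hty : Filter.Tendsto (fun ξ : ℝ => payoff R x (brY ξ R x y)) Filter.atTop (nhds m) := by
    refine (softmin_tendsto hn y (colPayoff R x) hym).congr fun ξ => ?_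
    rw [payoff_eq_col]
    unfold brY
    rw [Finset.sum_div]
    exact Finset.sum_congr rfl fun j _ => (div_mul_eq_mul_div _ _ _).symm
  have htx : Filter.Tendsto (fun ξ : ℝ => payoff R (brX ξ R x y) y) Filter.atTop (nhds M) := by
    have h1 := softmin_tendsto hn x (fun i => -(rowPayoff R y i)) hxm
    have h2 : ∀ ξ : ℝ,
        (∑ i, x i * Real.exp (-(ξ * -(rowPayoff R y i))) * -(rowPayoff R y i)) /
        (∑ i, x i * Real.exp (-(ξ * -(rowPayoff R y i)))) = -(payoff R (brX ξ R x y) y) := by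
      intro ξ
      rw [payoff_eq_row]
      unfold brX
      have he : ∀ i : Fin n, -(ξ * -(rowPayoff R y i)) = ξ * rowPayoff R y i := fun i => by ring
      simp only [he]
      rw [show (∑ i, x i * Real.exp (ξ * rowPayoff R y i) * -(rowPayoff R y i)) =
          -(∑ i, x i * Real.exp (ξ * rowPayoff R y i) * rowPayoff R y i) by
        rw [← Finset.sum_neg_distrib]
        exact Finset.sum_congr rfl fun i _ => by ring, neg_div]
      congr 1
      rw [Finset.sum_div]
      exact Finset.sum_congr rfl fun i _ => by rw [div_mul_eq_mul_div]
    have h3 := (h1.congr h2).neg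
    rw [hMdef]
    simpa using h3
  have hev1 : ∀ᶠ ξ : ℝ in Filter.atTop, payoff R x (brY ξ R x y) < m + s :=
    hty.eventually_lt_const (by linarith)
  have hev2 : ∀ᶠ ξ : ℝ in Filter.atTop, M - s < payoff R (brX ξ R x y) y :=
    htx.eventually_const_lt (by linarith)
  obtain ⟨a, ha⟩ := Filter.eventually_atTop.1 (hev1.and hev2)
  refine ⟨max a 1, lt_of_lt_of_le zero_lt_one (le_max_right a 1), fun ξ hξ => ?_⟩
  obtain ⟨hb1, hb2⟩ := ha ξ (le_trans (le_max_left a 1) hξ)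
  set yh := brY ξ R x y with hyh
  set xh := brX ξ R x y with hxh
  have hyhP : IsProbVec yh := brY_prob hn ξ R hym
  have hxhP : IsProbVec xh := brX_prob hn ξ R hxm
  -- payoff bounds for the updated strategies
  have hrowb : ∀ i, 0 ≤ rowPayoff R yh i ∧ rowPayoff R yh i ≤ 1 := by
    intro i
    constructor
    · exact Finset.sum_nonneg fun j _ => mul_nonneg (hR i j).1.le (hyhP.1 j)
    · unfold rowPayoff
      calc (∑ j, R i j * yh j) ≤ ∑ j, yh j := Finset.sum_le_sum fun j _ =>
          mul_le_of_le_one_left (hyhP.1 j) (hR i j).2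
      _ = 1 := hyhP.2
  have hcolb : ∀ j, 0 ≤ colPayoff R xh j ∧ colPayoff R xh j ≤ 1 := by
    intro j
    constructor
    · exact Finset.sum_nonneg fun i _ => mul_nonneg (hxhP.1 i) (hR i j).1.le
    · unfold colPayoff
      calc (∑ i, xh i * R i j) ≤ ∑ i, xh i := Finset.sum_le_sum fun i _ =>
          mul_le_of_le_one_right (hxhP.1 i) (hR i j).2
      _ = 1 := hxhP.2
  -- KL identities
  have hklx : klDiv xs (mwuX η R x yh) =
      klDiv xs x - η * payoff R xs yh +
        Real.log (∑ j, x j * Real.exp (η * rowPayoff R yh j)) := by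
    have h := kl_update xs x hxsP hxm (fun i => η * rowPayoff R yh i)
    have hsx : (∑ i, xs i * (η * rowPayoff R yh i)) = η * payoff R xs yh := by
      rw [payoff_eq_row, Finset.mul_sum]
      exact Finset.sum_congr rfl fun i _ => by ring
    rw [hsx] at h
    exact h
  have hkly : klDiv ys (mwuY η R y xh) =
      klDiv ys y + η * payoff R xh ys +
        Real.log (∑ k, y k * Real.exp (-(η * colPayoff R xh k))) := by
    have h := kl_update ys y hysP hym (fun j => -(η * colPayoff R xh j))
    have hsy : (∑ j, ys j * -(η * colPayoff R xh j)) = -(η * payoff R xh ys) := by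
      rw [payoff_eq_col, Finset.mul_sum, ← Finset.sum_neg_distrib]
      exact Finset.sum_congr rfl fun j _ => by ring
    rw [hsy, sub_neg_eq_add] at h
    exact h
  -- log bounds
  have hlogx : Real.log (∑ j, x j * Real.exp (η * rowPayoff R yh j)) ≤
      η * payoff R x yh + η ^ 2 := by
    have h := log_Z_le x (fun i => η * rowPayoff R yh i) hx hxm (η ^ 2)
      (fun i => by
        have h1 := (hrowb i).1
        have h2 := (hrowb i).2
        rw [abs_le]
        constructor <;> nlinarith)
      (fun i => by
        have h1 := (hrowb i).1
        have h2 := (hrowb i).2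
        calc (η * rowPayoff R yh i) ^ 2 = η ^ 2 * rowPayoff R yh i ^ 2 := by ring
        _ ≤ η ^ 2 * 1 := mul_le_mul_of_nonneg_left (by nlinarith) (sq_nonneg η)
        _ = η ^ 2 := by ring)
    have hsx : (∑ i, x i * (η * rowPayoff R yh i)) = η * payoff R x yh := by
      rw [payoff_eq_row, Finset.mul_sum]
      exact Finset.sum_congr rfl fun i _ => by ring
    rw [hsx] at h
    exact h
  have hlogy : Real.log (∑ k, y k * Real.exp (-(η * colPayoff R xh k))) ≤
      -(η * payoff R xh y) + η ^ 2 := by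
    have h := log_Z_le y (fun j => -(η * colPayoff R xh j)) hy hym (η ^ 2)
      (fun j => by
        have h1 := (hcolb j).1
        have h2 := (hcolb j).2
        rw [abs_le]
        constructor <;> nlinarith)
      (fun j => by
        have h1 := (hcolb j).1
        have h2 := (hcolb j).2
        calc (-(η * colPayoff R xh j)) ^ 2 = η ^ 2 * colPayoff R xh j ^ 2 := by ring
        _ ≤ η ^ 2 * 1 := mul_le_mul_of_nonneg_left (by nlinarith) (sq_nonneg η)
        _ = η ^ 2 := by ring)
    have hsy : (∑ j, y j * -(η * colPayoff R xh j)) = -(η * payoff R xh y) := by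
      rw [payoff_eq_col, Finset.mul_sum, ← Finset.sum_neg_distrib]
      exact Finset.sum_congr rfl fun j _ => by ring
    rw [hsy] at h
    exact h
  -- Nash bounds
  have hA : v ≤ payoff R xs yh := by
    rw [payoff_eq_col]
    calc v = ∑ j, yh j * v := by rw [← Finset.sum_mul, hyhP.2, one_mul]
    _ ≤ ∑ j, yh j * colPayoff R xs j := Finset.sum_le_sum fun j _ =>
        mul_le_mul_of_nonneg_left (hNcol j) (hyhP.1 j)
  have hB : payoff R xh ys ≤ v := by
    rw [payoff_eq_row]
    calc ∑ i, xh i * rowPayoff R ys i ≤ ∑ i, xh i * v := Finset.sum_le_sum fun i _ =>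
        mul_le_mul_of_nonneg_left (hNrow i) (hxhP.1 i)
    _ = v := by rw [← Finset.sum_mul, hxhP.2, one_mul]
  -- arithmetic
  have hpowadd : η ^ (1 + 1 / ρ) = η * s := by
    rw [hs, Real.rpow_add hηpos, Real.rpow_one]
  have hηle : η ≤ s := by
    have := Real.rpow_le_rpow_of_exponent_ge hηpos (by linarith : η ≤ 1) hρ1
    rwa [Real.rpow_one] at this
  have e1 : η * payoff R x yh ≤ η * (m + s) := mul_le_mul_of_nonneg_left hb1.le hηpos.le
  have e2 : η * (M - s) ≤ η * payoff R xh y := mul_le_mul_of_nonneg_left hb2.le hηpos.le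
  have e3 : η * v ≤ η * payoff R xs yh := mul_le_mul_of_nonneg_left hA hηpos.le
  have e4 : η * payoff R xh ys ≤ η * v := mul_le_mul_of_nonneg_left hB hηpos.le
  have e5 : η * (m + s) - η * (M - s) ≤ -(6 * (η * s)) := by
    have h := mul_le_mul_of_nonneg_left (show m - M + 2 * s ≤ -(6 * s) by linarith) hηpos.le
    linarith [h]
  have e6 : η ^ 2 ≤ η * s := by
    have h := mul_le_mul_of_nonneg_left hηle hηpos.le
    nlinarith [h]
  simp only [flbrStep, klProfile, Prod.fst, Prod.snd]
  rw [hpowadd, hklx, hkly]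
  linarith
end

section
/- Let R ∈ ℝ^{n×n}, let (x*,y*) be a Nash equilibrium of the associated zero-sum game, let (x,y) be a fully mixed profile, let x̂ and ŷ be probability vectors, and let η ≥ 0. Define the multiplicative update x'_i = x_i e^{η(Rŷ)_i} / Σ_j x_j e^{η(Rŷ)_j} and y'_j = y_j e^{−η(Rᵀx̂)_j} / Σ_i y_i e^{−η(Rᵀx̂)_i}. Then D_KL((x*,y*)||(x',y')) − D_KL((x*,y*)||(x,y)) ≤ ln(Σ_i x_i e^{η((Rŷ)_i − xᵀRy)}) + ln(Σ_j y_j e^{−η((Rᵀx̂)_j − xᵀRy)}). -/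
open Finset Real Filter

/-!
Writing the update as a Gibbs reweighting `x'ᵢ ∝ xᵢ e^{gᵢ}`, the change of `D_KL(x* ‖ ·)` is
exactly `ln Σⱼ xⱼ e^{gⱼ} - ⟨x*, g⟩`. For the two players this gives the two log-sum-exp terms
(centering by `xᵀRy` shifts them by `∓ η xᵀRy`, which cancel) minus `η (x*ᵀ R ŷ - x̂ᵀ R y*)`,
and the saddle-point property of a Nash equilibrium makes `x̂ᵀ R y* ≤ x*ᵀ R y* ≤ x*ᵀ R ŷ`.
-/

lemma log_sum_mul_exp_add {ι : Type*} [Fintype ι] [Nonempty ι] {x : ι → ℝ}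
    (hx : ∀ i, 0 < x i) (g : ι → ℝ) (a : ℝ) :
    Real.log (∑ i, x i * Real.exp (g i + a)) = Real.log (∑ i, x i * Real.exp (g i)) + a := by
  have hZ : 0 < ∑ i, x i * Real.exp (g i) :=
    Finset.sum_pos (fun i _ => mul_pos (hx i) (Real.exp_pos _)) Finset.univ_nonempty
  simp_rw [Real.exp_add, ← mul_assoc, ← Finset.sum_mul]
  rw [Real.log_mul hZ.ne' (Real.exp_pos a).ne', Real.log_exp]

lemma klDiv_gibbs_sub_klDiv {n : ℕ} {xs x : Fin n → ℝ} (hxs : ∑ i, xs i = 1)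
    (hx : FullyMixed x) (g : Fin n → ℝ) :
    klDiv xs (fun i => x i * Real.exp (g i) / ∑ j, x j * Real.exp (g j)) - klDiv xs x
      = Real.log (∑ j, x j * Real.exp (g j)) - ∑ i, xs i * g i := by
  set Z := ∑ j, x j * Real.exp (g j)
  have hn : (Finset.univ : Finset (Fin n)).Nonempty :=
    Finset.nonempty_of_sum_ne_zero (by rw [hxs]; exact one_ne_zero)
  have hZ : 0 < Z := Finset.sum_pos (fun j _ => mul_pos (hx j) (Real.exp_pos _)) hn
  have hterm : ∀ i, xs i * Real.log (xs i / (x i * Real.exp (g i) / Z))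
      = xs i * Real.log (xs i / x i) + xs i * (Real.log Z - g i) := by
    intro i
    rcases eq_or_ne (xs i) 0 with h0 | h0
    · simp [h0]
    have hratio :
        xs i / (x i * Real.exp (g i) / Z) = xs i / x i * Real.exp (Real.log Z - g i) := by
      rw [Real.exp_sub, Real.exp_log hZ]
      field_simp [(hx i).ne', (Real.exp_pos (g i)).ne']
    rw [hratio, Real.log_mul (div_ne_zero h0 (hx i).ne') (Real.exp_pos _).ne', Real.log_exp,
      mul_add]
  unfold klDiv
  simp only [hterm, Finset.sum_add_distrib, mul_sub, Finset.sum_sub_distrib, ← Finset.sum_mul,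
    hxs, one_mul]
  ring

section Payoff

variable {n : ℕ} (R : Matrix (Fin n) (Fin n) ℝ)

lemma sum_mul_rowPayoff (x y : Fin n → ℝ) : ∑ i, x i * rowPayoff R y i = payoff R x y := by
  simp only [rowPayoff, payoff, Finset.mul_sum, mul_assoc]

lemma sum_mul_colPayoff (x y : Fin n → ℝ) : ∑ j, y j * colPayoff R x j = payoff R x y := by
  simp only [colPayoff, payoff, Finset.mul_sum]
  rw [Finset.sum_comm]
  exact Finset.sum_congr rfl fun i _ => Finset.sum_congr rfl fun j _ => by ring

variable {R}

lemma payoff_le_of_forall_rowPayoff_le {x y : Fin n → ℝ} (hx : IsProbVec x) {v : ℝ}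
    (h : ∀ i, rowPayoff R y i ≤ v) : payoff R x y ≤ v :=
  calc payoff R x y = ∑ i, x i * rowPayoff R y i := (sum_mul_rowPayoff R x y).symm
    _ ≤ ∑ i, x i * v := Finset.sum_le_sum fun i _ => mul_le_mul_of_nonneg_left (h i) (hx.1 i)
    _ = v := by rw [← Finset.sum_mul, hx.2, one_mul]

lemma le_payoff_of_forall_le_colPayoff {x y : Fin n → ℝ} (hy : IsProbVec y) {v : ℝ}
    (h : ∀ j, v ≤ colPayoff R x j) : v ≤ payoff R x y :=
  calc v = ∑ j, y j * v := by rw [← Finset.sum_mul, hy.2, one_mul]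
    _ ≤ ∑ j, y j * colPayoff R x j :=
      Finset.sum_le_sum fun j _ => mul_le_mul_of_nonneg_left (h j) (hy.1 j)
    _ = payoff R x y := sum_mul_colPayoff R x y

lemma IsNash.payoff_le_payoff {xs ys xh yh : Fin n → ℝ} (hNash : IsNash R xs ys)
    (hxh : IsProbVec xh) (hyh : IsProbVec yh) : payoff R xh ys ≤ payoff R xs yh :=
  (payoff_le_of_forall_rowPayoff_le hxh hNash.2.2.1).trans
    (le_payoff_of_forall_le_colPayoff hyh hNash.2.2.2)

end Payoff

theorem mwu_kl_diff_le_logSumExp_general {n : ℕ} (R : Matrix (Fin n) (Fin n) ℝ)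
    (xs ys : Fin n → ℝ) (hNash : IsNash R xs ys)
    (x y : Fin n → ℝ)
    (hxm : FullyMixed x) (hym : FullyMixed y)
    (xh yh : Fin n → ℝ) (hxh : IsProbVec xh) (hyh : IsProbVec yh)
    (η : ℝ) (hη : 0 ≤ η) :
    klProfile xs ys (mwuX η R x yh) (mwuY η R y xh) - klProfile xs ys x y
      ≤ Real.log (∑ i, x i * Real.exp (η * (rowPayoff R yh i - payoff R x y)))
        + Real.log (∑ j, y j * Real.exp (-(η * (colPayoff R xh j - payoff R x y)))) := by
  have : Nonempty (Fin n) := Finset.univ_nonempty_iff.mp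
    (Finset.nonempty_of_sum_ne_zero (hNash.1.2 ▸ one_ne_zero))
  have hX := klDiv_gibbs_sub_klDiv hNash.1.2 hxm (fun i => η * rowPayoff R yh i)
  have hY := klDiv_gibbs_sub_klDiv hNash.2.1.2 hym (fun j => -(η * colPayoff R xh j))
  have hcX : Real.log (∑ i, x i * Real.exp (η * (rowPayoff R yh i - payoff R x y)))
      = Real.log (∑ i, x i * Real.exp (η * rowPayoff R yh i)) - η * payoff R x y := by
    convert log_sum_mul_exp_add hxm (fun i => η * rowPayoff R yh i) (-(η * payoff R x y))
      using 5 <;> ring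
  have hcY : Real.log (∑ j, y j * Real.exp (-(η * (colPayoff R xh j - payoff R x y))))
      = Real.log (∑ j, y j * Real.exp (-(η * colPayoff R xh j))) + η * payoff R x y := by
    convert log_sum_mul_exp_add hym (fun j => -(η * colPayoff R xh j)) (η * payoff R x y)
      using 5; ring
  have hwX : ∑ i, xs i * (η * rowPayoff R yh i) = η * payoff R xs yh := by
    rw [← sum_mul_rowPayoff, Finset.mul_sum]
    exact Finset.sum_congr rfl fun i _ => by ring
  have hwY : ∑ j, ys j * -(η * colPayoff R xh j) = -(η * payoff R xh ys) := by
    rw [← sum_mul_colPayoff, Finset.mul_sum, ← Finset.sum_neg_distrib]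
    exact Finset.sum_congr rfl fun j _ => by ring
  have hsaddle := mul_le_mul_of_nonneg_left (hNash.payoff_le_payoff hxh hyh) hη
  rw [hcX, hcY]
  unfold klProfile mwuX mwuY
  linarith

/-- If `(xs, ys)` is a Nash equilibrium and `η ≥ 0`, the change of KL
divergence under one multiplicative update is bounded by the two centered log-sum-exp terms. -/
theorem mwu_kl_diff_le_logSumExp {n : ℕ} (R : Matrix (Fin n) (Fin n) ℝ)
    (xs ys : Fin n → ℝ) (hNash : IsNash R xs ys)
    (x y : Fin n → ℝ) (hx : IsProbVec x) (hy : IsProbVec y)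
    (hxm : FullyMixed x) (hym : FullyMixed y)
    (xh yh : Fin n → ℝ) (hxh : IsProbVec xh) (hyh : IsProbVec yh)
    (η : ℝ) (hη : 0 ≤ η) :
    klProfile xs ys (mwuX η R x yh) (mwuY η R y xh) - klProfile xs ys x y
      ≤ Real.log (∑ i, x i * Real.exp (η * (rowPayoff R yh i - payoff R x y)))
        + Real.log (∑ j, y j * Real.exp (-(η * (colPayoff R xh j - payoff R x y)))) :=
  mwu_kl_diff_le_logSumExp_general R xs ys hNash x y hxm hym xh yh hxh hyh η hη
end

section
/- Let R ∈ ℝ^{n×n} define a zero-sum game with a unique Nash equilibrium (x*,y*) and value v = x*ᵀRy*. Then the equilibrium is quasi-strict: for every i ∉ supp(x*), e_iᵀRy* < v, and for every j ∉ supp(y*), x*ᵀRe_j > v. (In particular, for any η > 0, the quantities e^{η e_iᵀRy*}/e^{ηv} for i ∉ supp(x*) and e^{−η e_jᵀRᵀx*}/e^{−ηv} for j ∉ supp(y*) are strictly less than one.) -/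
open Finset Real Filter

/-!
Let `v` be the value and `xs i₀ = 0`. By Farkas' lemma, either some `x ≥ 0` with
`xᵀR ≥ v · ∑ x` has `x i₀ > 0`, or some `y ≥ 0` has `R y ≤ v · ∑ y - e_{i₀}`. Normalised, the first
would be an optimal row strategy other than `xs`; so the second holds, uniqueness makes `y` a
multiple of `ys`, and then `(R ys)_{i₀} < v`. The column statement is the row statement for the
game `-Rᵀ`. Farkas' lemma itself is the separation theorem for closed cones, applied to a finitely
generated cone, which is closed because by Carathéodory it is a finite union of cones over linearly
independent families.
-/

namespace PointedCone

variable {E ι : Type*}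

section Module

variable [AddCommGroup E] [Module ℝ E] {g : ι → E}

lemma mem_hull_image_finset_iff {s : Finset ι} {z : E} :
    z ∈ hull ℝ (g '' s) ↔ ∃ c : ι → ℝ, (∀ i ∈ s, 0 ≤ c i) ∧ ∑ i ∈ s, c i • g i = z := by
  rw [Submodule.mem_span_image_finset_iff_exists_fun']
  constructor
  · rintro ⟨c, rfl⟩
    exact ⟨fun i => c i, fun i _ => (c i).2, rfl⟩
  · rintro ⟨c, hc, rfl⟩
    refine ⟨fun i => ⟨max (c i) 0, le_max_right _ _⟩, sum_congr rfl fun i hi => ?_⟩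
    change max (c i) 0 • g i = c i • g i
    rw [max_eq_left (hc i hi)]

lemma exists_mem_hull_image_erase [DecidableEq ι] {s : Finset ι} {z : E}
    (hdep : ¬ LinearIndepOn ℝ g (s : Set ι)) (hz : z ∈ hull ℝ (g '' s)) :
    ∃ k ∈ s, z ∈ hull ℝ (g '' ↑(s.erase k)) := by
  obtain ⟨c, hc, rfl⟩ := mem_hull_image_finset_iff.1 hz
  obtain ⟨μ, hμ, k₀, hk₀, hμk₀⟩ : ∃ μ : ι → ℝ, ∑ i ∈ s, μ i • g i = 0 ∧ ∃ k ∈ s, 0 < μ k := by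
    obtain ⟨μ, hμ, k, hk, hμk⟩ := not_linearIndepOn_finset_iff.1 hdep
    rcases hμk.lt_or_gt with hneg | hpos
    · exact ⟨-μ, by simp [neg_smul, hμ], k, hk, by simpa using hneg⟩
    · exact ⟨μ, hμ, k, hk, hpos⟩
  -- move along the relation `μ` until the first coefficient of `c` hits zero
  obtain ⟨k, hk, hmin⟩ := ({i ∈ s | 0 < μ i}).exists_min_image (fun i => c i / μ i)
    ⟨k₀, mem_filter.2 ⟨hk₀, hμk₀⟩⟩
  obtain ⟨hks, hμk⟩ := mem_filter.1 hk
  set t := c k / μ k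
  have ht : 0 ≤ t := div_nonneg (hc k hks) hμk.le
  refine ⟨k, hks, mem_hull_image_finset_iff.2 ⟨fun i => c i - t * μ i, fun i hi => ?_, ?_⟩⟩
  · rcases lt_or_ge 0 (μ i) with hμi | hμi
    · have := hmin i (mem_filter.2 ⟨mem_of_mem_erase hi, hμi⟩)
      rw [le_div_iff₀ hμi] at this
      linarith
    · nlinarith [hc i (mem_of_mem_erase hi)]
  · have hzero : c k - t * μ k = 0 := by simp [t, hμk.ne']
    rw [sum_erase _ (by simp [hzero])]
    simp only [sub_smul, sum_sub_distrib, mul_smul, ← smul_sum, hμ, smul_zero, sub_zero]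

lemma exists_linearIndepOn_of_mem_hull_image [DecidableEq ι] (s : Finset ι) {z : E}
    (hz : z ∈ hull ℝ (g '' s)) :
    ∃ t ⊆ s, LinearIndepOn ℝ g (t : Set ι) ∧ z ∈ hull ℝ (g '' t) := by
  induction s using Finset.strongInduction with
  | H s ih =>
    by_cases hs : LinearIndepOn ℝ g (s : Set ι)
    · exact ⟨s, subset_rfl, hs, hz⟩
    obtain ⟨k, hk, hz'⟩ := exists_mem_hull_image_erase hs hz
    obtain ⟨t, hts, ht, hzt⟩ := ih _ (erase_ssubset hk) hz'
    exact ⟨t, hts.trans (erase_subset k s), ht, hzt⟩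

end Module

variable [NormedAddCommGroup E] [NormedSpace ℝ E] [Fintype ι]

lemma isClosed_hull_range_of_linearIndependent {g : ι → E} (hg : LinearIndependent ℝ g) :
    IsClosed (hull ℝ (Set.range g) : Set E) := by
  classical
  have himage : (hull ℝ (Set.range g) : Set E) = Fintype.linearCombination ℝ g '' Set.Ici 0 := by
    ext z
    rw [← Set.image_univ, ← coe_univ, SetLike.mem_coe, mem_hull_image_finset_iff]
    simp [Fintype.linearCombination_apply, Pi.le_def]
  rw [himage]
  exact (LinearMap.isClosedEmbedding_of_injective (LinearMap.ker_eq_bot.2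
    hg.fintypeLinearCombination_injective)).isClosedMap _ isClosed_Ici

lemma isClosed_hull_range (g : ι → E) : IsClosed (hull ℝ (Set.range g) : Set E) := by
  classical
  have hunion : (hull ℝ (Set.range g) : Set E) =
      ⋃ t ∈ {t : Finset ι | LinearIndepOn ℝ g (t : Set ι)}, hull ℝ (g '' t) := by
    ext z
    simp only [Set.mem_iUnion, Set.mem_ofPred_eq, SetLike.mem_coe, exists_prop]
    constructor
    · intro hz
      obtain ⟨t, -, ht, hzt⟩ := exists_linearIndepOn_of_mem_hull_image (univ : Finset ι)
        (by rwa [coe_univ, Set.image_univ])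
      exact ⟨t, ht, hzt⟩
    · rintro ⟨t, -, hzt⟩
      exact Submodule.span_mono (Set.image_subset_range g _) hzt
  rw [hunion]
  refine (Set.toFinite _).isClosed_biUnion fun t ht => ?_
  rw [Set.image_eq_range]
  exact isClosed_hull_range_of_linearIndependent ht

theorem mem_hull_range_of_forall_nonneg {g : ι → E} {c : E}
    (h : ∀ f : StrongDual ℝ E, (∀ i, 0 ≤ f (g i)) → 0 ≤ f c) : c ∈ hull ℝ (Set.range g) := by
  by_contra hc
  let C : ProperCone ℝ E := ⟨hull ℝ (Set.range g), isClosed_hull_range g⟩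
  obtain ⟨f, hfC, hfc⟩ := C.hyperplane_separation_point hc
  exact hfc.not_ge (h f fun i => hfC _ (subset_hull ⟨i, rfl⟩))

end PointedCone

open Matrix in
theorem Matrix.exists_nonneg_mulVec_le_of_forall_nonneg {m n : Type*} [Fintype m] [Fintype n]
    [DecidableEq m] (A : Matrix m n ℝ) (b : m → ℝ)
    (h : ∀ x : m → ℝ, 0 ≤ x → 0 ≤ x ᵥ* A → 0 ≤ x ⬝ᵥ b) : ∃ y, 0 ≤ y ∧ A *ᵥ y ≤ b := by
  let g : n ⊕ m → m → ℝ := Sum.elim (fun j => Aᵀ j) (fun i => Pi.single i 1)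
  have hb : b ∈ PointedCone.hull ℝ (Set.range g) := by
    refine PointedCone.mem_hull_range_of_forall_nonneg fun f hf => ?_
    set x : m → ℝ := fun i => f (Pi.single i 1)
    have hfx : ∀ z, f z = x ⬝ᵥ z := fun z => by
      conv_lhs => rw [pi_eq_sum_univ' z]
      simp [x, dotProduct, mul_comm]
    rw [hfx]
    refine h x (fun i => hf (.inr i)) fun j => ?_
    simpa [hfx, g, vecMul, dotProduct] using hf (.inl j)
  obtain ⟨c, hc, hcb⟩ := PointedCone.mem_hull_image_finset_iff.1
    (by rwa [coe_univ, Set.image_univ] : b ∈ PointedCone.hull ℝ (g '' (univ : Finset (n ⊕ m))))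
  refine ⟨fun j => c (.inl j), fun j => hc _ (mem_univ _), fun i => ?_⟩
  rw [← hcb, Fintype.sum_sum_type]
  simpa [g, mulVec, dotProduct, mul_comm, Pi.single_apply] using hc (.inr i) (mem_univ _)

section Game

open Matrix

variable {n : ℕ} {R : Matrix (Fin n) (Fin n) ℝ} {x y xs ys : Fin n → ℝ}

lemma rowPayoff_smul (R : Matrix (Fin n) (Fin n) ℝ) (c : ℝ) (y : Fin n → ℝ) :
    rowPayoff R (c • y) = c • rowPayoff R y :=
  R.mulVec_smul c y

lemma colPayoff_smul (R : Matrix (Fin n) (Fin n) ℝ) (c : ℝ) (x : Fin n → ℝ) :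
    colPayoff R (c • x) = c • colPayoff R x :=
  smul_vecMul c x R

lemma payoff_eq_dotProduct_rowPayoff (R : Matrix (Fin n) (Fin n) ℝ) (x y : Fin n → ℝ) :
    payoff R x y = x ⬝ᵥ rowPayoff R y := by
  simp only [payoff, rowPayoff, dotProduct, mul_sum, mul_assoc]

lemma payoff_eq_colPayoff_dotProduct (R : Matrix (Fin n) (Fin n) ℝ) (x y : Fin n → ℝ) :
    payoff R x y = colPayoff R x ⬝ᵥ y := by
  simp only [payoff, colPayoff, dotProduct, sum_mul]
  exact sum_comm

lemma rowPayoff_neg_transpose (R : Matrix (Fin n) (Fin n) ℝ) (x : Fin n → ℝ) :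
    rowPayoff (-Rᵀ) x = -colPayoff R x := by
  ext j
  simp [rowPayoff, colPayoff, mul_comm]

lemma colPayoff_neg_transpose (R : Matrix (Fin n) (Fin n) ℝ) (y : Fin n → ℝ) :
    colPayoff (-Rᵀ) y = -rowPayoff R y := by
  ext i
  simp [rowPayoff, colPayoff, mul_comm]

lemma payoff_neg_transpose (R : Matrix (Fin n) (Fin n) ℝ) (x y : Fin n → ℝ) :
    payoff (-Rᵀ) y x = -payoff R x y := by
  rw [payoff_eq_dotProduct_rowPayoff, rowPayoff_neg_transpose, payoff_eq_colPayoff_dotProduct,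
    dotProduct_neg, dotProduct_comm]

lemma IsNash.neg_transpose (h : IsNash R x y) : IsNash (-Rᵀ) y x := by
  obtain ⟨hx, hy, hrow, hcol⟩ := h
  refine ⟨hy, hx, fun j => ?_, fun i => ?_⟩
  · simpa [rowPayoff_neg_transpose, payoff_neg_transpose] using hcol j
  · simpa [colPayoff_neg_transpose, payoff_neg_transpose] using hrow i

lemma isNash_neg_transpose_iff : IsNash (-Rᵀ) y x ↔ IsNash R x y :=
  ⟨fun h => by simpa using h.neg_transpose, IsNash.neg_transpose⟩

lemma IsProbVec.dotProduct_le {p f : Fin n → ℝ} {c : ℝ} (hp : IsProbVec p) (hf : ∀ i, f i ≤ c) :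
    p ⬝ᵥ f ≤ c :=
  calc p ⬝ᵥ f ≤ ∑ i, p i * c := sum_le_sum fun i _ => mul_le_mul_of_nonneg_left (hf i) (hp.1 i)
    _ = c := by rw [← sum_mul, hp.2, one_mul]

lemma IsProbVec.le_dotProduct {p f : Fin n → ℝ} {c : ℝ} (hp : IsProbVec p) (hf : ∀ i, c ≤ f i) :
    c ≤ p ⬝ᵥ f :=
  calc c = ∑ i, p i * c := by rw [← sum_mul, hp.2, one_mul]
    _ ≤ p ⬝ᵥ f := sum_le_sum fun i _ => mul_le_mul_of_nonneg_left (hf i) (hp.1 i)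

lemma isProbVec_inv_sum_smul (hx : 0 ≤ x) (hs : 0 < ∑ i, x i) :
    IsProbVec ((∑ i, x i)⁻¹ • x) :=
  ⟨fun i => mul_nonneg (inv_nonneg.2 hs.le) (hx i), by simp [← mul_sum, hs.ne']⟩

lemma IsNash.of_le_colPayoff (h : IsNash R xs ys) (hx : IsProbVec x)
    (hcol : ∀ j, payoff R xs ys ≤ colPayoff R x j) : IsNash R x ys := by
  have hv : payoff R x ys = payoff R xs ys := le_antisymm
    (by rw [payoff_eq_dotProduct_rowPayoff]; exact hx.dotProduct_le h.2.2.1)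
    (by rw [payoff_eq_colPayoff_dotProduct R x ys, dotProduct_comm]; exact h.2.1.le_dotProduct hcol)
  exact ⟨hx, h.2.1, fun i => hv ▸ h.2.2.1 i, fun j => hv ▸ hcol j⟩

lemma IsNash.of_rowPayoff_le (h : IsNash R xs ys) (hy : IsProbVec y)
    (hrow : ∀ i, rowPayoff R y i ≤ payoff R xs ys) : IsNash R xs y := by
  refine isNash_neg_transpose_iff.1 (h.neg_transpose.of_le_colPayoff hy fun i => ?_)
  simpa [payoff_neg_transpose, colPayoff_neg_transpose] using hrow i

lemma IsNash.eq_sum_smul_of_le_colPayoff (h : IsNash R xs ys)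
    (huniq : ∀ x, IsNash R x ys → x = xs) (hx : 0 ≤ x)
    (hcol : ∀ j, payoff R xs ys * ∑ i, x i ≤ colPayoff R x j) : x = (∑ i, x i) • xs := by
  rcases (sum_nonneg fun i (_ : i ∈ univ) => hx i).eq_or_lt with hs | hs
  · ext i
    simp [(sum_eq_zero_iff_of_nonneg fun i _ => hx i).1 hs.symm i (mem_univ i), ← hs]
  · have hNash := h.of_le_colPayoff (isProbVec_inv_sum_smul hx hs) fun j => by
      rw [colPayoff_smul, Pi.smul_apply, smul_eq_mul, le_inv_mul_iff₀ hs, mul_comm]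
      exact hcol j
    rw [← huniq _ hNash, smul_inv_smul₀ hs.ne']

lemma IsNash.eq_sum_smul_of_rowPayoff_le (h : IsNash R xs ys)
    (huniq : ∀ y, IsNash R xs y → y = ys) (hy : 0 ≤ y)
    (hrow : ∀ i, rowPayoff R y i ≤ payoff R xs ys * ∑ j, y j) : y = (∑ j, y j) • ys := by
  refine h.neg_transpose.eq_sum_smul_of_le_colPayoff
    (fun y' hy' => huniq y' (isNash_neg_transpose_iff.1 hy')) hy fun i => ?_
  simpa [payoff_neg_transpose, colPayoff_neg_transpose] using hrow i

theorem IsNash.rowPayoff_lt_of_unique (h : IsNash R xs ys)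
    (huniq : ∀ x y, IsNash R x y → x = xs ∧ y = ys) {i₀ : Fin n} (hi₀ : xs i₀ = 0) :
    rowPayoff R ys i₀ < payoff R xs ys := by
  set v := payoff R xs ys
  let A : Matrix (Fin n) (Fin n) ℝ := of fun i j => R i j - v
  have hA : ∀ x j, (x ᵥ* A) j = colPayoff R x j - v * ∑ i, x i := fun x j => by
    simp only [A, vecMul, dotProduct, of_apply, mul_sub, sum_sub_distrib, ← sum_mul, colPayoff,
      mul_comm v]
  have hA' : ∀ y i, (A *ᵥ y) i = rowPayoff R y i - v * ∑ j, y j := fun y i => by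
    simp only [A, mulVec, dotProduct, of_apply, sub_mul, sum_sub_distrib, ← mul_sum, rowPayoff]
  obtain ⟨y, hy, hAy⟩ := A.exists_nonneg_mulVec_le_of_forall_nonneg (-Pi.single i₀ 1)
    fun x hx hxA => by
      have hxs := h.eq_sum_smul_of_le_colPayoff (fun x hx => (huniq x ys hx).1) hx fun j => by
        linarith [hA x j, show (0 : ℝ) ≤ (x ᵥ* A) j from hxA j]
      simp [congrFun hxs i₀, hi₀]
  have hrow : ∀ i, rowPayoff R y i ≤ v * ∑ j, y j - (Pi.single i₀ 1 : Fin n → ℝ) i :=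
    fun i => by linarith [hA' y i, show (A *ᵥ y) i ≤ -(Pi.single i₀ 1 : Fin n → ℝ) i from hAy i]
  have he : ∀ i, (0 : ℝ) ≤ (Pi.single i₀ 1 : Fin n → ℝ) i := fun i => by
    by_cases hi : i = i₀ <;> simp [hi]
  have hys := h.eq_sum_smul_of_rowPayoff_le (fun y hy => (huniq xs y hy).2) hy fun i => by
    linarith [hrow i, he i]
  have hyi₀ : rowPayoff R y i₀ = (∑ j, y j) * rowPayoff R ys i₀ := by
    conv_lhs => rw [hys]
    rw [rowPayoff_smul, Pi.smul_apply, smul_eq_mul]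
  have := hrow i₀
  rw [hyi₀, Pi.single_eq_same] at this
  by_contra! hge
  nlinarith [sum_nonneg fun j (_ : j ∈ univ) => hy j]

theorem IsNash.payoff_lt_colPayoff_of_unique (h : IsNash R xs ys)
    (huniq : ∀ x y, IsNash R x y → x = xs ∧ y = ys) {j₀ : Fin n} (hj₀ : ys j₀ = 0) :
    payoff R xs ys < colPayoff R xs j₀ := by
  have := h.neg_transpose.rowPayoff_lt_of_unique
    (fun y x hyx => (huniq x y (isNash_neg_transpose_iff.1 hyx)).symm) hj₀
  rwa [rowPayoff_neg_transpose, payoff_neg_transpose, Pi.neg_apply, neg_lt_neg_iff] at this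

end Game

/-- A unique Nash equilibrium of a zero-sum game is quasi-strict: pure
strategies outside the supports obtain strictly worse payoff than the value `v = xsᵀRys`.
In particular, for any `η > 0` the corresponding exponential ratios are strictly below one. -/
theorem unique_nash_quasi_strict {n : ℕ} (R : Matrix (Fin n) (Fin n) ℝ)
    (xs ys : Fin n → ℝ) (hNash : IsNash R xs ys)
    (huniq : ∀ x y, IsNash R x y → x = xs ∧ y = ys) :
    (∀ i, xs i = 0 → rowPayoff R ys i < payoff R xs ys) ∧
    (∀ j, ys j = 0 → payoff R xs ys < colPayoff R xs j) ∧
    (∀ η > (0 : ℝ),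
      (∀ i, xs i = 0 →
        Real.exp (η * rowPayoff R ys i) / Real.exp (η * payoff R xs ys) < 1) ∧
      (∀ j, ys j = 0 →
        Real.exp (-(η * colPayoff R xs j)) / Real.exp (-(η * payoff R xs ys)) < 1)) := by
  have hrow : ∀ i, xs i = 0 → rowPayoff R ys i < payoff R xs ys :=
    fun i => hNash.rowPayoff_lt_of_unique huniq
  have hcol : ∀ j, ys j = 0 → payoff R xs ys < colPayoff R xs j :=
    fun j => hNash.payoff_lt_colPayoff_of_unique huniq
  refine ⟨hrow, hcol, fun η hη => ⟨fun i hi => ?_, fun j hj => ?_⟩⟩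
  · rw [div_lt_one (Real.exp_pos _), Real.exp_lt_exp]
    exact mul_lt_mul_of_pos_left (hrow i hi) hη
  · rw [div_lt_one (Real.exp_pos _), Real.exp_lt_exp, neg_lt_neg_iff]
    exact mul_lt_mul_of_pos_left (hcol j hj) hη
end
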